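/- arXiv:1803.06093 — 3 statements merged into one kernel-verified Lean document; each statement's English description precedes it below -/
import Mathlib

section
/- Let A ∈ ℝ be arbitrary and suppose that R(ξ,ξ,ξ,ξ) ≤ A·g(ξ,ξ)² for every ξ ∈ V. Then for any finite collection of vectors ξ_1,…,ξ_m ∈ V that are mutually orthogonal with respect to g, one has Σ_{α,β=1}^m R(ξ_α,ξ_α,ξ_β,ξ_β) ≤ (A/2)·[ (Σ_{α=1}^m g(ξ_α,ξ_α))² + Σ_{α=1}^m g(ξ_α,ξ_α)² ]. (This is Royden's averaging inequality, valid for any real upper bound A on the holomorphic sectional curvature.) -/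
/-!
Average the curvature bound over the vectors `ζ = ∑ α, ε_α • ξ_α`, where the phases `ε_α` run
independently over the fourth roots of unity. Orthogonality makes `g(ζ,ζ) = ∑ α, g(ξ_α,ξ_α)` for
every choice of phases. The mean of `ε_α ε̄_β ε_γ ε̄_δ` is `1` when `α = β, γ = δ` or
`α = δ, β = γ`, and `0` otherwise (signs `±1` would not suffice: `ε_α² ε̄_β²` would average to `1`),
so the mean of `R(ζ,ζ,ζ,ζ)` is `2 ∑ α β, R(ξ_α,ξ_α,ξ_β,ξ_β) - ∑ α, R(ξ_α,ξ_α,ξ_α,ξ_α)`. It is at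
most `A (∑ α, g(ξ_α,ξ_α))²`, and the diagonal terms are bounded by the hypothesis once more.
-/

open Finset ComplexConjugate
open scoped BigOperators

section
variable {V ι : Type*} [AddCommGroup V] [Module ℂ V]

structure IsSesquilinearForm (f : V → V → ℂ) : Prop where
  add_left : ∀ x x' y, f (x + x') y = f x y + f x' y
  smul_left : ∀ (a : ℂ) x y, f (a • x) y = a * f x y
  add_right : ∀ x y y', f x (y + y') = f x y + f x y'
  smul_right : ∀ (a : ℂ) x y, f x (a • y) = conj a * f x y

namespace IsSesquilinearForm

lemma of_conj_symm {f : V → V → ℂ} (hadd : ∀ x x' y, f (x + x') y = f x y + f x' y)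
    (hsmul : ∀ (a : ℂ) x y, f (a • x) y = a * f x y) (hconj : ∀ x y, f x y = conj (f y x)) :
    IsSesquilinearForm f where
  add_left := hadd
  smul_left := hsmul
  add_right x y y' := by rw [hconj, hadd, map_add, ← hconj, ← hconj]
  smul_right a x y := by rw [hconj, hsmul, map_mul, ← hconj]

variable {f : V → V → ℂ} [Fintype ι]

lemma apply_sum_sum (hf : IsSesquilinearForm f) (c d : ι → ℂ) (v w : ι → V) :
    f (∑ i, c i • v i) (∑ j, d j • w j) = ∑ i, ∑ j, c i * conj (d j) * f (v i) (w j) := by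
  let B : V →ₗ[ℂ] V →ₗ⋆[ℂ] ℂ :=
    LinearMap.mk₂'ₛₗ _ _ f hf.add_left hf.smul_left hf.add_right hf.smul_right
  change B _ _ = _
  simp only [B, map_sum, map_smulₛₗ, LinearMap.sum_apply, LinearMap.smul_apply,
    LinearMap.mk₂'ₛₗ_apply, RingHom.id_apply, smul_eq_mul, mul_sum]
  rw [sum_comm]
  exact sum_congr rfl fun i _ ↦ sum_congr rfl fun j _ ↦ by ring

lemma apply_sum_sum_of_orthogonal (hf : IsSesquilinearForm f) (c : ι → ℂ) {v : ι → V}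
    (hv : ∀ i j, i ≠ j → f (v i) (v j) = 0) :
    f (∑ i, c i • v i) (∑ i, c i • v i) = ∑ i, c i * conj (c i) * f (v i) (v i) := by
  rw [hf.apply_sum_sum]
  exact sum_congr rfl fun i _ ↦
    Fintype.sum_eq_single i fun j hj ↦ by rw [hv i j (Ne.symm hj), mul_zero]

end IsSesquilinearForm

lemma apply_sum_sum_sum_sum [Fintype ι] {R : V → V → V → V → ℂ}
    (h₁₂ : ∀ z w, IsSesquilinearForm fun x y ↦ R x y z w) (h₃₄ : ∀ x y, IsSesquilinearForm (R x y))
    (c : ι → ℂ) (v : ι → V) :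
    R (∑ i, c i • v i) (∑ i, c i • v i) (∑ i, c i • v i) (∑ i, c i • v i) =
      ∑ α, ∑ β, ∑ γ, ∑ δ, c α * conj (c β) * c γ * conj (c δ) * R (v α) (v β) (v γ) (v δ) := by
  rw [(h₁₂ _ _).apply_sum_sum]
  refine sum_congr rfl fun α _ ↦ sum_congr rfl fun β _ ↦ ?_
  rw [(h₃₄ _ _).apply_sum_sum, mul_sum]
  refine sum_congr rfl fun γ _ ↦ ?_
  rw [mul_sum]
  exact sum_congr rfl fun δ _ ↦ by ring

lemma forall_zmod_four_sub_add_sub_eq_zero_iff [DecidableEq ι] (α β γ δ : ι) :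
    (∀ k : ι → ZMod 4, k α - k β + k γ - k δ = 0) ↔ (α = β ∧ γ = δ) ∨ (α = δ ∧ β = γ) := by
  refine ⟨fun h ↦ ?_, by rintro (⟨rfl, rfl⟩ | ⟨rfl, rfl⟩) k <;> ring⟩
  have hα := h (Pi.single α 1)
  have hγ := h (Pi.single γ 1)
  simp only [Pi.single_apply] at hα hγ
  grind

variable [Fintype ι] [DecidableEq ι]

lemma expect_stdAddChar_mul_conj_mul_conj (α β γ δ : ι) :
    𝔼 k : ι → ZMod 4, ZMod.stdAddChar (k α) * conj (ZMod.stdAddChar (k β)) *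
        ZMod.stdAddChar (k γ) * conj (ZMod.stdAddChar (k δ)) =
      if (α = β ∧ γ = δ) ∨ (α = δ ∧ β = γ) then 1 else 0 := by
  let e := Pi.evalAddMonoidHom fun _ : ι ↦ ZMod 4
  let L := e α - e β + e γ - e δ
  have hL (k : ι → ZMod 4) : ZMod.stdAddChar (k α) * conj (ZMod.stdAddChar (k β)) *
      ZMod.stdAddChar (k γ) * conj (ZMod.stdAddChar (k δ)) =
      (ZMod.stdAddChar (N := 4)).compAddMonoidHom L k := by
    simp [L, e, sub_eq_add_neg, AddChar.map_add_eq_mul, AddChar.map_neg_eq_conj]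
  have hzero : (ZMod.stdAddChar (N := 4)).compAddMonoidHom L = 0 ↔
      (α = β ∧ γ = δ) ∨ (α = δ ∧ β = γ) := by
    have h_eq_one (j : ZMod 4) : ZMod.stdAddChar j = 1 ↔ j = 0 := by
      rw [← AddChar.map_zero_eq_one (ZMod.stdAddChar (N := 4)),
        (ZMod.injective_stdAddChar (N := 4)).eq_iff]
    simp [AddChar.eq_zero_iff, ← forall_zmod_four_sub_add_sub_eq_zero_iff, L, e, h_eq_one]
  simp only [hL, AddChar.expect_eq_ite, hzero]

lemma sum_ite_pairing {M : Type*} [AddCommGroup M] (T : ι → ι → ι → ι → M) :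
    ∑ α, ∑ β, ∑ γ, ∑ δ, (if (α = β ∧ γ = δ) ∨ (α = δ ∧ β = γ) then T α β γ δ else 0) =
      ∑ α, ∑ γ, T α α γ γ + ∑ α, ∑ β, T α β β α - ∑ α, T α α α α := by
  have h_incl_excl (α β γ δ : ι) :
      (if (α = β ∧ γ = δ) ∨ (α = δ ∧ β = γ) then T α β γ δ else 0) =
        (if α = β then if γ = δ then T α β γ δ else 0 else 0) +
          (if α = δ then if β = γ then T α β γ δ else 0 else 0) -
          (if α = β then if β = γ then if γ = δ then T α β γ δ else 0 else 0 else 0) := by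
    by_cases α = β <;> by_cases γ = δ <;> by_cases α = δ <;> by_cases β = γ <;> simp_all
  simp only [h_incl_excl, sum_add_distrib, sum_sub_distrib, sum_ite_irrel, sum_ite_eq,
    mem_univ, if_true, sum_const_zero]

lemma expect_apply_sum_stdAddChar_smul {R : V → V → V → V → ℂ}
    (h₁₂ : ∀ z w, IsSesquilinearForm fun x y ↦ R x y z w)
    (h₃₄ : ∀ x y, IsSesquilinearForm (R x y)) (v : ι → V) :
    𝔼 k : ι → ZMod 4, R (∑ i, ZMod.stdAddChar (k i) • v i) (∑ i, ZMod.stdAddChar (k i) • v i)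
        (∑ i, ZMod.stdAddChar (k i) • v i) (∑ i, ZMod.stdAddChar (k i) • v i) =
      ∑ α, ∑ γ, R (v α) (v α) (v γ) (v γ) + ∑ α, ∑ β, R (v α) (v β) (v β) (v α) -
        ∑ α, R (v α) (v α) (v α) (v α) := by
  simp only [apply_sum_sum_sum_sum h₁₂ h₃₄, expect_sum_comm, ← expect_mul,
    expect_stdAddChar_mul_conj_mul_conj, ite_mul, one_mul, zero_mul]
  exact sum_ite_pairing _

end

theorem royden_averaging_inequality_general
    (V : Type*) [AddCommGroup V] [Module ℂ V]
    (g : V → V → ℂ)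
    -- `g` is a Hermitian inner product: linear in the first argument,
    -- conjugate-linear in the second, positive definite
    (hg_add : ∀ x y z : V, g (x + y) z = g x z + g y z)
    (hg_smul : ∀ (a : ℂ) (x z : V), g (a • x) z = a * g x z)
    (hg_conj : ∀ x y : V, g x y = starRingEnd ℂ (g y x))
    -- `R` is a Kähler curvature-type tensor: ℂ-linear in the 1st and 3rd arguments,
    -- conjugate-linear in the 2nd and 4th arguments
    (R : V → V → V → V → ℂ)
    (hR_add1 : ∀ x x' y z w : V, R (x + x') y z w = R x y z w + R x' y z w)
    (hR_smul1 : ∀ (a : ℂ) (x y z w : V), R (a • x) y z w = a * R x y z w)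
    (hR_add2 : ∀ x y y' z w : V, R x (y + y') z w = R x y z w + R x y' z w)
    (hR_smul2 : ∀ (a : ℂ) (x y z w : V), R x (a • y) z w = starRingEnd ℂ a * R x y z w)
    (hR_add3 : ∀ x y z z' w : V, R x y (z + z') w = R x y z w + R x y z' w)
    (hR_smul3 : ∀ (a : ℂ) (x y z w : V), R x y (a • z) w = a * R x y z w)
    (hR_add4 : ∀ x y z w w' : V, R x y z (w + w') = R x y z w + R x y z w')
    (hR_smul4 : ∀ (a : ℂ) (x y z w : V), R x y z (a • w) = starRingEnd ℂ a * R x y z w)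
    -- Kähler symmetries
    (hR_sym24 : ∀ x y z w : V, R x y z w = R x w z y)
    -- holomorphic sectional curvature bounded above by the (arbitrary) real constant `A`
    (A : ℝ)
    (hHSC : ∀ ξ : V, (R ξ ξ ξ ξ).re ≤ A * ((g ξ ξ).re) ^ 2)
    -- a finite collection of vectors, mutually orthogonal with respect to `g`
    (m : ℕ) (ξ : Fin m → V)
    (hortho : ∀ α β : Fin m, α ≠ β → g (ξ α) (ξ β) = 0) :
    (∑ α : Fin m, ∑ β : Fin m, R (ξ α) (ξ α) (ξ β) (ξ β)).re ≤
      (A / 2) * ((∑ α : Fin m, (g (ξ α) (ξ α)).re) ^ 2 +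
        ∑ α : Fin m, ((g (ξ α) (ξ α)).re) ^ 2) := by
  have hg := IsSesquilinearForm.of_conj_symm hg_add hg_smul hg_conj
  have h₁₂ : ∀ z w, IsSesquilinearForm fun x y ↦ R x y z w := fun z w ↦
    ⟨fun x x' y ↦ hR_add1 x x' y z w, fun a x y ↦ hR_smul1 a x y z w,
      fun x y y' ↦ hR_add2 x y y' z w, fun a x y ↦ hR_smul2 a x y z w⟩
  have h₃₄ : ∀ x y, IsSesquilinearForm (R x y) := fun x y ↦
    ⟨hR_add3 x y, fun a ↦ hR_smul3 a x y, hR_add4 x y, fun a ↦ hR_smul4 a x y⟩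
  let ζ (k : Fin m → ZMod 4) : V := ∑ α, ZMod.stdAddChar (k α) • ξ α
  have h_mean : 𝔼 k, R (ζ k) (ζ k) (ζ k) (ζ k) = ∑ α, ∑ γ, R (ξ α) (ξ α) (ξ γ) (ξ γ) +
      ∑ α, ∑ β, R (ξ α) (ξ β) (ξ β) (ξ α) - ∑ α, R (ξ α) (ξ α) (ξ α) (ξ α) :=
    expect_apply_sum_stdAddChar_smul h₁₂ h₃₄ ξ
  have h_swap : ∑ α, ∑ β, R (ξ α) (ξ β) (ξ β) (ξ α) = ∑ α, ∑ β, R (ξ α) (ξ α) (ξ β) (ξ β) :=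
    sum_congr rfl fun α _ ↦ sum_congr rfl fun β _ ↦ hR_sym24 _ _ _ _
  have h_norm (k : Fin m → ZMod 4) : g (ζ k) (ζ k) = ∑ α, g (ξ α) (ξ α) := by
    rw [hg.apply_sum_sum_of_orthogonal _ hortho]
    simp [Complex.mul_conj', AddChar.norm_apply]
  have h_mean_le : (𝔼 k, R (ζ k) (ζ k) (ζ k) (ζ k)).re ≤ A * (∑ α, (g (ξ α) (ξ α)).re) ^ 2 := by
    rw [Complex.re_expect]
    refine expect_le univ_nonempty fun k _ ↦ ?_
    simpa [h_norm, Complex.re_sum] using hHSC (ζ k)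
  have h_diag : (∑ α, R (ξ α) (ξ α) (ξ α) (ξ α)).re ≤ A * ∑ α, (g (ξ α) (ξ α)).re ^ 2 := by
    rw [Complex.re_sum, mul_sum]
    exact sum_le_sum fun α _ ↦ hHSC (ξ α)
  rw [h_mean, h_swap, Complex.sub_re, Complex.add_re] at h_mean_le
  linarith

/-- **Royden's averaging inequality.**
Let `V` be an `n`-dimensional complex vector space (`n ≥ 1`) with a Hermitian inner
product `g`, and let `R` be a Kähler curvature-type tensor on `V`. If `A ∈ ℝ` is any
real number such that `R(ξ,ξ,ξ,ξ) ≤ A·g(ξ,ξ)²` for every `ξ ∈ V`, then for any finite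
collection of vectors `ξ_1,…,ξ_m ∈ V` that are mutually orthogonal with respect to `g`,
`Σ_{α,β} R(ξ_α,ξ_α,ξ_β,ξ_β) ≤ (A/2)·[(Σ_α g(ξ_α,ξ_α))² + Σ_α g(ξ_α,ξ_α)²]`. -/
theorem royden_averaging_inequality
    (V : Type*) [AddCommGroup V] [Module ℂ V] [FiniteDimensional ℂ V]
    (n : ℕ) (hn : 1 ≤ n) (hdim : Module.finrank ℂ V = n)
    (g : V → V → ℂ)
    -- `g` is a Hermitian inner product: linear in the first argument,
    -- conjugate-linear in the second, positive definite
    (hg_add : ∀ x y z : V, g (x + y) z = g x z + g y z)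
    (hg_smul : ∀ (a : ℂ) (x z : V), g (a • x) z = a * g x z)
    (hg_conj : ∀ x y : V, g x y = starRingEnd ℂ (g y x))
    (hg_pos : ∀ x : V, x ≠ 0 → 0 < (g x x).re)
    -- `R` is a Kähler curvature-type tensor: ℂ-linear in the 1st and 3rd arguments,
    -- conjugate-linear in the 2nd and 4th arguments
    (R : V → V → V → V → ℂ)
    (hR_add1 : ∀ x x' y z w : V, R (x + x') y z w = R x y z w + R x' y z w)
    (hR_smul1 : ∀ (a : ℂ) (x y z w : V), R (a • x) y z w = a * R x y z w)
    (hR_add2 : ∀ x y y' z w : V, R x (y + y') z w = R x y z w + R x y' z w)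
    (hR_smul2 : ∀ (a : ℂ) (x y z w : V), R x (a • y) z w = starRingEnd ℂ a * R x y z w)
    (hR_add3 : ∀ x y z z' w : V, R x y (z + z') w = R x y z w + R x y z' w)
    (hR_smul3 : ∀ (a : ℂ) (x y z w : V), R x y (a • z) w = a * R x y z w)
    (hR_add4 : ∀ x y z w w' : V, R x y z (w + w') = R x y z w + R x y z w')
    (hR_smul4 : ∀ (a : ℂ) (x y z w : V), R x y z (a • w) = starRingEnd ℂ a * R x y z w)
    -- Kähler symmetries
    (hR_sym13 : ∀ x y z w : V, R x y z w = R z y x w)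
    (hR_sym24 : ∀ x y z w : V, R x y z w = R x w z y)
    (hR_conj : ∀ x y z w : V, R x y z w = starRingEnd ℂ (R y x w z))
    -- holomorphic sectional curvature bounded above by the (arbitrary) real constant `A`
    (A : ℝ)
    (hHSC : ∀ ξ : V, (R ξ ξ ξ ξ).re ≤ A * ((g ξ ξ).re) ^ 2)
    -- a finite collection of vectors, mutually orthogonal with respect to `g`
    (m : ℕ) (ξ : Fin m → V)
    (hortho : ∀ α β : Fin m, α ≠ β → g (ξ α) (ξ β) = 0) :
    (∑ α : Fin m, ∑ β : Fin m, R (ξ α) (ξ α) (ξ β) (ξ β)).re ≤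
      (A / 2) * ((∑ α : Fin m, (g (ξ α) (ξ α)).re) ^ 2 +
        ∑ α : Fin m, ((g (ξ α) (ξ α)).re) ^ 2) :=
  royden_averaging_inequality_general V g hg_add hg_smul hg_conj R hR_add1 hR_smul1 hR_add2 hR_smul2
    hR_add3 hR_smul3 hR_add4 hR_smul4 hR_sym24 A hHSC m ξ hortho
end

section
/- Let n ≥ 1 and let A and B be positive-definite Hermitian n×n complex matrices. Then the traces of B⁻¹A and A⁻¹B and the determinants of A and B are positive real numbers, and trace(B⁻¹A) ≤ (1/(n−1)!) · (trace(A⁻¹B))^{n−1} · det(A)/det(B). -/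
/-!
With `M = A^{-1/2} B A^{-1/2}`, which is positive definite with `tr M = tr (A⁻¹B)`,
`tr M⁻¹ = tr (B⁻¹A)` and `det M = det B / det A`, the inequality reads, in terms of the
eigenvalues `μᵢ > 0` of `M`, `(∏ μ) · ∑ μᵢ⁻¹ ≤ (∑ μ)^(n-1) / (n-1)!`. The left side is the
elementary symmetric function `e_{n-1}(μ)`, and `k! e_k ≤ e_1^k` for nonnegative reals because
every monomial of `e_k` occurs `k!` times in the expansion of `e_1^k`.
-/

open Matrix ComplexOrder Finset
open scoped Nat

theorem Multiset.esymm_cons {R : Type*} [CommSemiring R] (a : R) (s : Multiset R) (k : ℕ) :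
    (a ::ₘ s).esymm (k + 1) = s.esymm (k + 1) + a * s.esymm k := by
  simp [esymm, powersetCard_cons, map_map, sum_map_mul_left]

section OrderedSemiring

variable {R : Type*} [CommSemiring R] [LinearOrder R] [IsOrderedRing R] [ExistsAddOfLE R]

theorem Multiset.factorial_mul_esymm_le_sum_pow {s : Multiset R} (hs : ∀ x ∈ s, 0 ≤ x) (k : ℕ) :
    (k ! : R) * s.esymm k ≤ s.sum ^ k := by
  induction s using Multiset.induction_on generalizing k with
  | empty => cases k <;> simp [esymm, powersetCard_zero_right]
  | cons a s ih =>
    have ha : 0 ≤ a := hs a (mem_cons_self a s)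
    have hs' : ∀ x ∈ s, 0 ≤ x := fun x hx => hs x (mem_cons_of_mem hx)
    cases k with
    | zero => simp [esymm]
    | succ k =>
      calc ((k + 1)! : R) * (a ::ₘ s).esymm (k + 1)
          = ((k + 1)! : R) * s.esymm (k + 1) + (k + 1 : ℕ) * a * ((k ! : R) * s.esymm k) := by
            push_cast [esymm_cons, Nat.factorial_succ]; ring
        _ ≤ s.sum ^ (k + 1) + (k + 1 : ℕ) * a * s.sum ^ k := by
            gcongr
            · exact ih hs' (k + 1)
            · exact ih hs' k
        _ ≤ (s.sum + a) ^ (k + 1) := by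
            simpa [mul_right_comm] using pow_add_mul_le_add_pow (sum_nonneg hs')
              (add_nonneg (mul_nonneg zero_le_two (sum_nonneg hs')) ha) (k + 1)
        _ = (a ::ₘ s).sum ^ (k + 1) := by rw [sum_cons, add_comm]

theorem Finset.factorial_mul_sum_prod_erase_le_sum_pow {ι : Type*} [DecidableEq ι]
    {s : Finset ι} {f : ι → R} (hf : ∀ i ∈ s, 0 ≤ f i) :
    ((#s - 1)! : R) * ∑ i ∈ s, ∏ j ∈ s.erase i, f j ≤ (∑ i ∈ s, f i) ^ (#s - 1) := by
  have herase : ∑ i ∈ s, ∏ j ∈ s.erase i, f j ≤ ∑ t ∈ s.powersetCard (#s - 1), ∏ j ∈ t, f j := by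
    rw [← sum_image (f := fun t => ∏ j ∈ t, f j) s.erase_injOn]
    refine sum_le_sum_of_subset_of_nonneg ?_ fun t ht _ => prod_nonneg fun j hj => hf j ?_
    · intro t ht
      obtain ⟨i, hi, rfl⟩ := mem_image.mp ht
      exact mem_powersetCard.mpr ⟨erase_subset i s, card_erase_of_mem hi⟩
    · exact (mem_powersetCard.mp ht).1 hj
  calc ((#s - 1)! : R) * ∑ i ∈ s, ∏ j ∈ s.erase i, f j
      ≤ ((#s - 1)! : R) * (s.val.map f).esymm (#s - 1) := by
        rw [esymm_map_val]; gcongr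
    _ ≤ (s.val.map f).sum ^ (#s - 1) :=
        Multiset.factorial_mul_esymm_le_sum_pow (by simpa using hf) _
    _ = (∑ i ∈ s, f i) ^ (#s - 1) := rfl

end OrderedSemiring

theorem Fintype.sum_inv_le_pow_sum_mul_inv_prod {K : Type*} [Field K] [LinearOrder K]
    [IsStrictOrderedRing K] {ι : Type*} [Fintype ι] {μ : ι → K} (hμ : ∀ i, 0 < μ i) :
    ∑ i, (μ i)⁻¹ ≤
      1 / ((Fintype.card ι - 1)! : K) * (∑ i, μ i) ^ (Fintype.card ι - 1) * (∏ i, μ i)⁻¹ := by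
  classical
  have hprod : 0 < ∏ i, μ i := prod_pos fun i _ => hμ i
  have herase (i : ι) : ∏ j ∈ univ.erase i, μ j = (∏ j, μ j) * (μ i)⁻¹ := by
    rw [← mul_prod_erase univ μ (mem_univ i)]
    field_simp [(hμ i).ne']
  have key := factorial_mul_sum_prod_erase_le_sum_pow (s := univ) fun i _ => (hμ i).le
  simp only [herase, ← mul_sum, card_univ] at key
  rw [one_div_mul_eq_div, ← div_eq_mul_inv, div_div, le_div_iff₀ (by positivity)]
  linarith

namespace Matrix

variable {𝕜 : Type*} [RCLike 𝕜] {n : Type*} [Fintype n] [DecidableEq n]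

theorem IsHermitian.trace_cfc {A : Matrix n n 𝕜} (hA : A.IsHermitian) (f : ℝ → ℝ) :
    (cfc f A).trace = ∑ i, (f (hA.eigenvalues i) : 𝕜) := by
  rw [hA.cfc_eq, IsHermitian.cfc, Unitary.conjStarAlgAut_apply, trace_mul_cycle,
    Unitary.coe_star_mul_self, one_mul, trace_diagonal]
  rfl

theorem PosDef.trace_inv {A : Matrix n n 𝕜} (hA : A.PosDef) :
    A⁻¹.trace = ∑ i, (hA.1.eigenvalues i : 𝕜)⁻¹ := by
  rw [nonsing_inv_eq_ringInverse, ← cfc_ringInverse_id (R := ℝ) _ hA.isUnit hA.1.isSelfAdjoint,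
    hA.1.trace_cfc]
  simp

theorem PosDef.re_trace_inv_le {M : Matrix n n 𝕜} (hM : M.PosDef) :
    RCLike.re M⁻¹.trace ≤ 1 / ((Fintype.card n - 1)! : ℝ) *
      (RCLike.re M.trace) ^ (Fintype.card n - 1) * (RCLike.re M.det)⁻¹ := by
  rw [hM.trace_inv, hM.1.trace_eq_sum_eigenvalues, hM.1.det_eq_prod_eigenvalues]
  simp only [map_sum, ← RCLike.ofReal_inv, ← RCLike.ofReal_prod, RCLike.ofReal_re]
  exact Fintype.sum_inv_le_pow_sum_mul_inv_prod hM.eigenvalues_pos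

open scoped MatrixOrder in
theorem PosDef.exists_posDef_trace_eq_trace_inv_mul {A B : Matrix n n 𝕜}
    (hA : A.PosDef) (hB : B.PosDef) :
    ∃ M : Matrix n n 𝕜, M.PosDef ∧ M.trace = (A⁻¹ * B).trace ∧
      M⁻¹.trace = (B⁻¹ * A).trace ∧ M.det * A.det = B.det := by
  have hAdet : IsUnit A.det := (isUnit_iff_isUnit_det A).mp hA.isUnit
  set S := CFC.sqrt A⁻¹
  have hSS : S * S = A⁻¹ := CFC.sqrt_mul_sqrt_self _ hA.inv.posSemidef.nonneg
  have hS : S.PosDef := isStrictlyPositive_iff_posDef.mp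
    (IsStrictlyPositive.sqrt _ (isStrictlyPositive_iff_posDef.mpr hA.inv))
  refine ⟨S * B * S, ?_, ?_, ?_, ?_⟩
  · simpa [hS.1.eq] using
      hB.conjTranspose_mul_mul_same (mulVec_injective_iff_isUnit.mpr hS.isUnit)
  · rw [trace_mul_cycle, hSS]
  · rw [mul_inv_rev, mul_inv_rev, ← Matrix.mul_assoc, trace_mul_cycle, ← mul_inv_rev, hSS,
      nonsing_inv_nonsing_inv _ hAdet, trace_mul_comm]
  · calc (S * B * S).det * A.det = (S * S * A).det * B.det := by simp only [det_mul]; ring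
      _ = B.det := by rw [hSS, nonsing_inv_mul _ hAdet, det_one, one_mul]

end Matrix

/-- **Pointwise linear-algebra inequality for two Hermitian metrics.**
Let `n ≥ 1` and let `A`, `B` be positive-definite Hermitian `n×n` complex matrices. Then
`trace(B⁻¹A)`, `trace(A⁻¹B)`, `det(A)` and `det(B)` are positive real numbers, and
`trace(B⁻¹A) ≤ (1/(n−1)!) · (trace(A⁻¹B))^(n−1) · det(A)/det(B)`. -/
theorem trace_det_metric_inequality
    (n : ℕ) (hn : 1 ≤ n) (A B : Matrix (Fin n) (Fin n) ℂ)
    (hA : A.PosDef) (hB : B.PosDef) :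
    ((B⁻¹ * A).trace.im = 0 ∧ 0 < (B⁻¹ * A).trace.re) ∧
      ((A⁻¹ * B).trace.im = 0 ∧ 0 < (A⁻¹ * B).trace.re) ∧
      (A.det.im = 0 ∧ 0 < A.det.re) ∧
      (B.det.im = 0 ∧ 0 < B.det.re) ∧
      (B⁻¹ * A).trace.re ≤
        (1 / ((n - 1).factorial : ℝ)) * ((A⁻¹ * B).trace.re) ^ (n - 1) *
          (A.det.re / B.det.re) := by
  have : Nonempty (Fin n) := Fin.pos_iff_nonempty.mp hn
  have real_pos {z : ℂ} (hz : 0 < z) : z.im = 0 ∧ 0 < z.re :=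
    (Complex.pos_iff.mp hz).symm.imp_left Eq.symm
  obtain ⟨M, hM, htr, htr_inv, hdet⟩ := hA.exists_posDef_trace_eq_trace_inv_mul hB
  obtain ⟨hAim, hAre⟩ := real_pos hA.det_pos
  obtain ⟨hBim, hBre⟩ := real_pos hB.det_pos
  have hMdet : M.det.re = B.det.re / A.det.re := by
    rw [eq_div_iff hAre.ne', ← hdet, Complex.mul_re, hAim, mul_zero, sub_zero]
  rw [← htr, ← htr_inv]
  refine ⟨real_pos hM.inv.trace_pos, real_pos hM.trace_pos, ⟨hAim, hAre⟩, ⟨hBim, hBre⟩, ?_⟩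
  simpa only [Fintype.card_fin, RCLike.re_to_complex, hMdet, inv_div] using hM.re_trace_inv_le
end

section
/- Let n ≥ 1, let A and B be positive-definite Hermitian n×n complex matrices, and let C₁ > 0 and K > 0 be real numbers such that trace(A⁻¹B) ≤ C₁ and det(A) ≤ K·det(B) (all these quantities being positive reals). Then for every vector x ∈ ℂⁿ, (1/C₁)·(x*Bx) ≤ x*Ax ≤ (C₁^{n−1}·K/(n−1)!)·(x*Bx). -/
/-!
Write `A = Lᴴ L` and `B = Lᴴ M L`. Then `tr (A⁻¹ B) = tr M` and `det B = det M · det A`, so the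
eigenvalues `μᵢ > 0` of `M` satisfy `∑ μᵢ ≤ C₁` and `K ∏ μᵢ ≥ 1`. Hence `μᵢ ≤ C₁`, and since
`(n-1)! ∏_{j ≠ i} μⱼ` is one term of the multinomial expansion of `(∑_{j ≠ i} μⱼ)^(n-1) ≤ C₁^(n-1)`,
also `μᵢ ≥ c := (n-1)! / (C₁^(n-1) K)`. In the Loewner order these say `c • 1 ≤ M ≤ C₁ • 1`, and
congruence by `L` turns them into `c • A ≤ B ≤ C₁ • A`.
-/

open Matrix ComplexOrder
open scoped MatrixOrder Finset Nat

section OrderedSemiring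

variable {R : Type*} [CommSemiring R] [PartialOrder R] [IsOrderedRing R]

theorem succ_mul_mul_pow_le_add_pow {a b : R} (ha : 0 ≤ a) (hb : 0 ≤ b) (m : ℕ) :
    (m + 1) * a * b ^ m ≤ (a + b) ^ (m + 1) := by
  rw [add_pow]
  calc (m + 1) * a * b ^ m = a ^ 1 * b ^ (m + 1 - 1) * ((m + 1).choose 1 : ℕ) := by
        push_cast [Nat.choose_one_right]; ring
    _ ≤ _ := Finset.single_le_sum (f := fun k => a ^ k * b ^ (m + 1 - k) * ((m + 1).choose k : ℕ))
        (fun k _ => by positivity) (by simp)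

theorem Finset.factorial_mul_prod_le_sum_pow {ι : Type*} (s : Finset ι) {f : ι → R}
    (hf : ∀ i ∈ s, 0 ≤ f i) : (#s)! * ∏ i ∈ s, f i ≤ (∑ i ∈ s, f i) ^ #s := by
  induction s using Finset.cons_induction with
  | empty => simp
  | cons a s _ ih =>
    obtain ⟨hfa, hfs⟩ : 0 ≤ f a ∧ ∀ i ∈ s, 0 ≤ f i := by simpa using hf
    rw [card_cons, prod_cons, sum_cons, Nat.factorial_succ]
    calc ((#s + 1) * (#s)! : ℕ) * (f a * ∏ i ∈ s, f i)
        = (#s + 1) * f a * ((#s)! * ∏ i ∈ s, f i) := by push_cast; ring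
      _ ≤ (#s + 1) * f a * (∑ i ∈ s, f i) ^ #s :=
        mul_le_mul_of_nonneg_left (ih hfs) (mul_nonneg (by simp [add_nonneg]) hfa)
      _ ≤ (f a + ∑ i ∈ s, f i) ^ (#s + 1) :=
        succ_mul_mul_pow_le_add_pow hfa (sum_nonneg hfs) _

end OrderedSemiring

section EigenvalueBounds

variable {ι : Type*} [Fintype ι] [DecidableEq ι] {μ : ι → ℝ} {C : ℝ}

theorem factorial_mul_prod_le_pow_mul (hμ : ∀ i, 0 ≤ μ i) (hsum : ∑ i, μ i ≤ C) (i : ι) :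
    (Fintype.card ι - 1)! * ∏ j, μ j ≤ C ^ (Fintype.card ι - 1) * μ i := by
  set s := Finset.univ.erase i
  have hcard : #s = Fintype.card ι - 1 := by
    rw [Finset.card_erase_of_mem (Finset.mem_univ i), Finset.card_univ]
  have hsum_s : ∑ j ∈ s, μ j ≤ C :=
    (Finset.sum_le_sum_of_subset_of_nonneg (Finset.erase_subset i _) fun j _ _ => hμ j).trans hsum
  rw [← Finset.mul_prod_erase _ μ (Finset.mem_univ i), ← hcard]
  calc _ = μ i * ((#s)! * ∏ j ∈ s, μ j) := by ring
    _ ≤ μ i * (∑ j ∈ s, μ j) ^ #s := by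
        gcongr
        · exact hμ i
        · exact Finset.factorial_mul_prod_le_sum_pow _ fun j _ => hμ j
    _ ≤ μ i * C ^ #s := by
        gcongr
        · exact hμ i
        · exact Finset.sum_nonneg fun j _ => hμ j
    _ = _ := mul_comm _ _

theorem factorial_div_le_of_sum_le_of_one_le_mul_prod {K : ℝ} (hC : 0 < C) (hK : 0 < K)
    (hμ : ∀ i, 0 ≤ μ i) (hsum : ∑ i, μ i ≤ C) (hprod : 1 ≤ K * ∏ i, μ i) (i : ι) :
    (Fintype.card ι - 1)! / (C ^ (Fintype.card ι - 1) * K) ≤ μ i := by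
  have h := factorial_mul_prod_le_pow_mul hμ hsum i
  rw [div_le_iff₀ (by positivity)]
  nlinarith [Nat.factorial_pos (Fintype.card ι - 1)]

end EigenvalueBounds

namespace Matrix

variable {n 𝕜 : Type*} [Fintype n] [RCLike 𝕜]

theorem re_dotProduct_mulVec_le_of_le {X Y : Matrix n n 𝕜} (h : X ≤ Y) (x : n → 𝕜) :
    RCLike.re (star x ⬝ᵥ X *ᵥ x) ≤ RCLike.re (star x ⬝ᵥ Y *ᵥ x) := by
  have := (le_iff.mp h).re_dotProduct_nonneg x
  rwa [sub_mulVec, dotProduct_sub, map_sub, sub_nonneg] at this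

theorem re_dotProduct_smul_mulVec (X : Matrix n n 𝕜) (c : ℝ) (x : n → 𝕜) :
    RCLike.re (star x ⬝ᵥ (c • X) *ᵥ x) = c * RCLike.re (star x ⬝ᵥ X *ᵥ x) := by
  rw [smul_mulVec, dotProduct_smul, RCLike.smul_re]

variable [DecidableEq n]

theorem IsHermitian.le_smul_one_iff {M : Matrix n n 𝕜} (hM : M.IsHermitian) {c : ℝ} :
    M ≤ c • 1 ↔ ∀ i, hM.eigenvalues i ≤ c := by
  rw [← Algebra.algebraMap_eq_smul_one, le_algebraMap_iff_spectrum_le hM.isSelfAdjoint,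
    hM.spectrum_real_eq_range_eigenvalues, Set.forall_mem_range]

theorem IsHermitian.smul_one_le_iff {M : Matrix n n 𝕜} (hM : M.IsHermitian) {c : ℝ} :
    c • 1 ≤ M ↔ ∀ i, c ≤ hM.eigenvalues i := by
  rw [← Algebra.algebraMap_eq_smul_one, algebraMap_le_iff_le_spectrum hM.isSelfAdjoint,
    hM.spectrum_real_eq_range_eigenvalues, Set.forall_mem_range]

theorem conjTranspose_mul_mul_le_smul {M : Matrix n n 𝕜} {c : ℝ} (h : M ≤ c • 1)
    (L : Matrix n n 𝕜) : Lᴴ * M * L ≤ c • (Lᴴ * L) :=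
  (star_left_conjugate_le_conjugate h L).trans_eq (by simp [star_eq_conjTranspose])

theorem smul_le_conjTranspose_mul_mul {M : Matrix n n 𝕜} {c : ℝ} (h : c • 1 ≤ M)
    (L : Matrix n n 𝕜) : c • (Lᴴ * L) ≤ Lᴴ * M * L :=
  (star_left_conjugate_le_conjugate h L).trans_eq' (by simp [star_eq_conjTranspose])

theorem trace_inv_mul_conjTranspose_mul_mul {L : Matrix n n 𝕜} (hL : IsUnit L)
    (M : Matrix n n 𝕜) : ((Lᴴ * L)⁻¹ * (Lᴴ * M * L)).trace = M.trace := by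
  rw [Matrix.mul_inv_rev, mul_assoc, ← mul_assoc (Lᴴ)⁻¹, ← mul_assoc (Lᴴ)⁻¹,
    nonsing_inv_mul _ ((isUnit_iff_isUnit_det Lᴴ).mp hL.star), one_mul, trace_mul_comm, mul_assoc,
    mul_nonsing_inv _ ((isUnit_iff_isUnit_det _).mp hL), mul_one]

theorem det_conjTranspose_mul_mul (L M : Matrix n n 𝕜) :
    (Lᴴ * M * L).det = M.det * (Lᴴ * L).det := by
  simp only [det_mul]; ring

theorem PosDef.exists_conjTranspose_mul_mul_eq {A B : Matrix n n 𝕜} (hA : A.PosDef)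
    (hB : B.PosDef) :
    ∃ L M : Matrix n n 𝕜, IsUnit L ∧ A = Lᴴ * L ∧ M.PosDef ∧ B = Lᴴ * M * L := by
  obtain ⟨L, rfl⟩ := CStarAlgebra.nonneg_iff_eq_star_mul_self.mp hA.posSemidef.nonneg
  have hL : IsUnit L := isUnit_of_mul_isUnit_right hA.isUnit
  have hL_inv : Function.Injective L⁻¹.mulVec :=
    mulVec_injective_iff_isUnit.mpr (isUnit_nonsing_inv_iff.mpr hL)
  refine ⟨L, (L⁻¹)ᴴ * B * L⁻¹, hL, rfl, hB.conjTranspose_mul_mul_same hL_inv, ?_⟩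
  rw [conjTranspose_nonsing_inv, ← mul_assoc, ← mul_assoc,
    mul_nonsing_inv _ ((isUnit_iff_isUnit_det Lᴴ).mp hL.star), one_mul, mul_assoc,
    nonsing_inv_mul _ ((isUnit_iff_isUnit_det _).mp hL), mul_one]

end Matrix

theorem two_sided_metric_comparison_general
    (n : ℕ) (A B : Matrix (Fin n) (Fin n) ℂ)
    (hA : A.PosDef) (hB : B.PosDef)
    (C₁ K : ℝ) (hC₁ : 0 < C₁) (hK : 0 < K)
    (htrace : (A⁻¹ * B).trace.re ≤ C₁)
    (hdet : A.det.re ≤ K * B.det.re) :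
    ∀ x : Fin n → ℂ,
      (1 / C₁) * (star x ⬝ᵥ B.mulVec x).re ≤ (star x ⬝ᵥ A.mulVec x).re ∧
      (star x ⬝ᵥ A.mulVec x).re ≤
        (C₁ ^ (n - 1) * K / ((n - 1).factorial : ℝ)) * (star x ⬝ᵥ B.mulVec x).re := by
  intro x
  obtain ⟨L, M, hL, rfl, hM, rfl⟩ := hA.exists_conjTranspose_mul_mul_eq hB
  set μ := hM.1.eigenvalues
  have hμ : ∀ i, 0 ≤ μ i := fun i => (hM.eigenvalues_pos i).le
  have hsum : ∑ i, μ i ≤ C₁ := by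
    rwa [← RCLike.re_to_complex, trace_inv_mul_conjTranspose_mul_mul hL,
      hM.1.trace_eq_sum_eigenvalues, ← RCLike.ofReal_sum, RCLike.ofReal_re] at htrace
  have hprod : 1 ≤ K * ∏ i, μ i := by
    simp only [← RCLike.re_to_complex] at hdet
    rw [det_conjTranspose_mul_mul, hM.1.det_eq_prod_eigenvalues, ← RCLike.ofReal_prod,
      RCLike.re_ofReal_mul] at hdet
    have hA_det : 0 < RCLike.re (Lᴴ * L).det := (RCLike.pos_iff.mp hA.det_pos).1
    nlinarith
  have hB_le_A := conjTranspose_mul_mul_le_smul (hM.1.le_smul_one_iff.mpr fun i =>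
    (Finset.single_le_sum (fun j _ => hμ j) (Finset.mem_univ i)).trans hsum) L
  have hA_le_B := smul_le_conjTranspose_mul_mul (hM.1.smul_one_le_iff.mpr
    (factorial_div_le_of_sum_le_of_one_le_mul_prod hC₁ hK hμ hsum hprod)) L
  have hxBx := (re_dotProduct_mulVec_le_of_le hB_le_A x).trans_eq
    (re_dotProduct_smul_mulVec _ _ x)
  have hxAx := (re_dotProduct_smul_mulVec _ _ x).symm.trans_le
    (re_dotProduct_mulVec_le_of_le hA_le_B x)
  simp only [Fintype.card_fin, RCLike.re_to_complex] at hxBx hxAx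
  constructor
  · rwa [one_div_mul_eq_div, div_le_iff₀' hC₁]
  · rwa [← inv_div, inv_mul_eq_div, le_div_iff₀' (by positivity)]

/-- **Two-sided metric comparison from trace and volume bounds.**
Let `n ≥ 1`, let `A`, `B` be positive-definite Hermitian `n×n` complex matrices, and let
`C₁ > 0`, `K > 0` be reals with `trace(A⁻¹B) ≤ C₁` and `det(A) ≤ K·det(B)` (all these
quantities being positive reals). Then for every `x ∈ ℂⁿ`,
`(1/C₁)·(x*Bx) ≤ x*Ax ≤ (C₁^(n−1)·K/(n−1)!)·(x*Bx)`. -/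
theorem two_sided_metric_comparison
    (n : ℕ) (hn : 1 ≤ n) (A B : Matrix (Fin n) (Fin n) ℂ)
    (hA : A.PosDef) (hB : B.PosDef)
    (C₁ K : ℝ) (hC₁ : 0 < C₁) (hK : 0 < K)
    (htrace : (A⁻¹ * B).trace.re ≤ C₁)
    (hdet : A.det.re ≤ K * B.det.re) :
    ∀ x : Fin n → ℂ,
      (1 / C₁) * (star x ⬝ᵥ B.mulVec x).re ≤ (star x ⬝ᵥ A.mulVec x).re ∧
      (star x ⬝ᵥ A.mulVec x).re ≤
        (C₁ ^ (n - 1) * K / ((n - 1).factorial : ℝ)) * (star x ⬝ᵥ B.mulVec x).re :=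
  two_sided_metric_comparison_general n A B hA hB C₁ K hC₁ hK htrace hdet
end
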